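/- Let k ∈ ℕ, σ > 0, δ > 0 and let Y_1, Y_2, … be i.i.d. random vectors in ℝ^k with mean μ = E[Y_1], satisfying: for every η ∈ ℝ^k with ‖η‖² ≤ δ, E[exp(⟨η, Y_1 − μ⟩)] ≤ exp(σ·⟨η,η⟩/2). Set S_n = Σ_{i=1}^n (Y_i − μ). Then for any probability measure γ on the closed ball B_δ(0) = {η ∈ ℝ^k : ‖η‖² ≤ δ}, defining Z_n = ∫_{B_δ(0)} exp(⟨η, S_n⟩ − n·σ·⟨η,η⟩/2) dγ(η), one has E[ sup_{n∈ℕ} √(Z_n) ] ≤ 2. -/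

import Mathlib

open MeasureTheory ProbabilityTheory Filter
open scoped RealInnerProductSpace ENNReal

/-!
For each fixed `η` in the ball, `exp(⟨η, S_n⟩ - nσ⟨η,η⟩/2)` is a nonnegative supermartingale for
the filtration of the past increments: the new factor `exp(⟨η, Y_n - μ⟩ - σ⟨η,η⟩/2)` is
independent of the past and has mean at most one by the sub-Gaussian bound. By Tonelli the mixture
`Z_n` is again a nonnegative supermartingale, with `Z_0 = 1`. Ville's inequality (optional stopping
at the first passage above a level) gives `P(sup_n Z_n ≥ t²) ≤ t⁻²`, and the layer-cake formula
turns this into `E[sup_n √Z_n] ≤ 1 + ∫_1^∞ t⁻² dt = 2`.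
-/

open Set in
theorem lintegral_le_two_of_measure_lt_le_rpow_neg_two {α : Type*} [MeasurableSpace α]
    {μ : Measure α} [IsProbabilityMeasure μ] {g : α → ℝ≥0∞} (hg : AEMeasurable g μ)
    (htail : ∀ t : ℝ, 1 < t → μ {x | ENNReal.ofReal t < g x} ≤ ENNReal.ofReal (t ^ (-2 : ℝ))) :
    ∫⁻ x, g x ∂μ ≤ 2 := by
  have hfin : ∀ᵐ x ∂μ, g x ≠ ∞ := by
    refine ae_iff.2 (le_antisymm (ge_of_tendsto
      (f := fun t : ℝ => ENNReal.ofReal (t ^ (-2 : ℝ))) (x := atTop) ?_ ?_) bot_le)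
    · exact (ENNReal.tendsto_ofReal (tendsto_rpow_neg_atTop two_pos)).trans (by simp)
    · filter_upwards [eventually_gt_atTop 1] with t ht
      refine (measure_mono fun x (hx : ¬g x ≠ ∞) => ?_).trans (htail t ht)
      show ENNReal.ofReal t < g x
      rw [not_not.1 hx]
      exact ENNReal.ofReal_lt_top
  have hmeas_le : ∀ t, 0 < t → μ {x | t < (g x).toReal} ≤ μ {x | ENNReal.ofReal t < g x} :=
    fun t ht => measure_mono fun x hx =>
      ((ENNReal.ofReal_lt_ofReal_iff_of_nonneg ht.le).2 hx).trans_le ENNReal.ofReal_toReal_le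
  have hsq : ∫ t in Ioi (1 : ℝ), t ^ (-2 : ℝ) = 1 := by
    rw [integral_Ioi_rpow_of_lt (by norm_num) one_pos]
    norm_num
  calc ∫⁻ x, g x ∂μ = ∫⁻ x, ENNReal.ofReal (g x).toReal ∂μ :=
        lintegral_congr_ae (hfin.mono fun x hx => (ENNReal.ofReal_toReal hx).symm)
    _ = ∫⁻ t in Ioi 0, μ {x | t < (g x).toReal} :=
        lintegral_eq_lintegral_meas_lt μ (.of_forall fun _ => ENNReal.toReal_nonneg)
          hg.ennreal_toReal
    _ ≤ (∫⁻ t in Ioc (0 : ℝ) 1, μ {x | t < (g x).toReal})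
          + ∫⁻ t in Ioi 1, μ {x | t < (g x).toReal} :=
        (lintegral_mono_set (Ioi_subset_Ioc_union_Ioi (b := 1))).trans (lintegral_union_le _ _ _)
    _ ≤ (∫⁻ t in Ioc (0 : ℝ) 1, 1) + ∫⁻ t in Ioi (1 : ℝ), ENNReal.ofReal (t ^ (-2 : ℝ)) := by
        refine add_le_add (lintegral_mono fun t => prob_le_one)
          (setLIntegral_mono' measurableSet_Ioi fun t ht => ?_)
        exact (hmeas_le t (zero_lt_one.trans ht)).trans (htail t ht)
    _ = 2 := by
        rw [← ofReal_integral_eq_lintegral_ofReal, hsq]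
        · simp only [lintegral_const, MeasurableSet.univ, Measure.restrict_apply, univ_inter,
            Real.volume_Ioc, sub_zero, ENNReal.ofReal_one, one_mul]
          norm_num
        · exact integrableOn_Ioi_rpow_of_lt (by norm_num) one_pos
        · exact ae_restrict_of_forall_mem measurableSet_Ioi fun t ht =>
            Real.rpow_nonneg (zero_lt_one.trans ht).le _

namespace MeasureTheory

variable {Ω : Type*} {m0 : MeasurableSpace Ω} {P : Measure Ω} {𝒢 : Filtration ℕ m0}
  {f : ℕ → Ω → ℝ}

theorem Supermartingale.maximal_ineq [IsFiniteMeasure P] (hf : Supermartingale f 𝒢 P)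
    (hnn : 0 ≤ f) (ε : ℝ) (n : ℕ) :
    ENNReal.ofReal ε * P {ω | ∃ k ≤ n, ε ≤ f k ω} ≤ ENNReal.ofReal (∫ ω, f 0 ω ∂P) := by
  set τ : Ω → ℕ∞ := fun ω => (hittingBtwn f (Set.Ici ε) 0 n ω : ℕ)
  have hτ : IsStoppingTime 𝒢 τ :=
    hf.stronglyAdapted.adapted.isStoppingTime_hittingBtwn measurableSet_Ici
  have hτn : ∀ ω, τ ω ≤ n := fun ω => WithTop.coe_le_coe.2 (hittingBtwn_le ω)
  have hτint : Integrable (stoppedValue f τ) P := integrable_stoppedValue ℕ hτ hf.integrable hτn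
  have hhit : {ω | ∃ k ≤ n, ε ≤ f k ω} ⊆ {ω | ε ≤ stoppedValue f τ ω} :=
    fun ω ⟨k, hk, hfk⟩ => stoppedValue_hittingBtwn_mem ⟨k, ⟨Nat.zero_le k, hk⟩, hfk⟩
  have hstop : ∫ ω, stoppedValue f τ ω ∂P ≤ ∫ ω, f 0 ω ∂P := by
    have := hf.neg.expected_stoppedValue_mono (isStoppingTime_const 𝒢 0) hτ
      (fun ω => bot_le) hτn
    simpa [stoppedValue, integral_neg] using this
  calc ENNReal.ofReal ε * P {ω | ∃ k ≤ n, ε ≤ f k ω}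
      ≤ ENNReal.ofReal ε * P {ω | ε ≤ stoppedValue f τ ω} := by gcongr
    _ = ENNReal.ofReal (ε * P.real {ω | ε ≤ stoppedValue f τ ω}) := by
      rw [ENNReal.ofReal_mul' measureReal_nonneg, ofReal_measureReal]
    _ ≤ ENNReal.ofReal (∫ ω, f 0 ω ∂P) := by
      gcongr
      exact (mul_meas_ge_le_integral_of_nonneg (.of_forall fun ω => hnn _ ω) hτint ε).trans hstop

theorem Supermartingale.ville_ineq [IsFiniteMeasure P] (hf : Supermartingale f 𝒢 P)
    (hnn : 0 ≤ f) (ε : ℝ) :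
    ENNReal.ofReal ε * P {ω | ∃ n, ε ≤ f n ω} ≤ ENNReal.ofReal (∫ ω, f 0 ω ∂P) := by
  have hunion : {ω | ∃ n, ε ≤ f n ω} = ⋃ n, {ω | ∃ k ≤ n, ε ≤ f k ω} := by
    ext ω
    simp only [Set.mem_ofPred_eq, Set.mem_iUnion]
    exact ⟨fun ⟨n, hn⟩ => ⟨n, n, le_rfl, hn⟩, fun ⟨_, k, _, hk⟩ => ⟨k, hk⟩⟩
  have hmono : Monotone fun n => {ω | ∃ k ≤ n, ε ≤ f k ω} :=
    fun m n hmn ω ⟨k, hk, hfk⟩ => ⟨k, hk.trans hmn, hfk⟩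
  rw [hunion, hmono.measure_iUnion, ENNReal.mul_iSup]
  exact iSup_le (hf.maximal_ineq hnn ε)

theorem supermartingale_of_setLIntegral_succ_le [IsFiniteMeasure P] (hadp : StronglyAdapted 𝒢 f)
    (hnn : 0 ≤ f) (h0 : ∫⁻ ω, ENNReal.ofReal (f 0 ω) ∂P ≠ ∞)
    (hf : ∀ n, ∀ A, MeasurableSet[𝒢 n] A →
      ∫⁻ ω in A, ENNReal.ofReal (f (n + 1) ω) ∂P ≤ ∫⁻ ω in A, ENNReal.ofReal (f n ω) ∂P) :
    Supermartingale f 𝒢 P := by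
  have hle : ∀ n, ∫⁻ ω, ENNReal.ofReal (f n ω) ∂P ≤ ∫⁻ ω, ENNReal.ofReal (f 0 ω) ∂P := by
    intro n
    induction n with
    | zero => exact le_rfl
    | succ n ih => exact le_trans (by simpa using hf n Set.univ MeasurableSet.univ) ih
  have hint : ∀ n, Integrable (f n) P := fun n =>
    ⟨((hadp n).mono (𝒢.le n)).aestronglyMeasurable,
      (hasFiniteIntegral_iff_ofReal (.of_forall (hnn n))).2 ((hle n).trans_lt h0.lt_top)⟩
  refine supermartingale_of_setIntegral_succ_le hadp hint fun n A hA => ?_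
  have hA' := 𝒢.le n A hA
  rw [← ENNReal.ofReal_le_ofReal_iff (setIntegral_nonneg hA' fun ω _ => hnn n ω),
    ofReal_integral_eq_lintegral_ofReal (hint _).integrableOn (.of_forall fun ω => hnn _ ω),
    ofReal_integral_eq_lintegral_ofReal (hint _).integrableOn (.of_forall fun ω => hnn _ ω)]
  exact hf n A hA

theorem Supermartingale.lintegral_iSup_sqrt_le_two [IsProbabilityMeasure P]
    (hf : Supermartingale f 𝒢 P) (hnn : 0 ≤ f) (h0 : ∫ ω, f 0 ω ∂P ≤ 1) :
    ∫⁻ ω, ⨆ n, ENNReal.ofReal √(f n ω) ∂P ≤ 2 := by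
  have hmeas : ∀ n, Measurable (f n) := fun n =>
    (hf.stronglyMeasurable n).measurable.mono (𝒢.le n) le_rfl
  refine lintegral_le_two_of_measure_lt_le_rpow_neg_two (by fun_prop) fun t ht => ?_
  have ht0 : 0 < t := zero_lt_one.trans ht
  have hsub : {ω | ENNReal.ofReal t < ⨆ n, ENNReal.ofReal √(f n ω)}
      ⊆ {ω | ∃ n, t ^ 2 ≤ f n ω} := by
    intro ω (hω : ENNReal.ofReal t < _)
    obtain ⟨n, hn⟩ := lt_iSup_iff.1 hω
    exact ⟨n, ((Real.lt_sqrt ht0.le).1 (ENNReal.ofReal_lt_ofReal_iff'.1 hn).1).le⟩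
  have hville := (hf.ville_ineq hnn (t ^ 2)).trans (ENNReal.ofReal_le_one.2 h0)
  refine (measure_mono hsub).trans ?_
  rw [Real.rpow_neg ht0.le, Real.rpow_two, ENNReal.ofReal_inv_of_pos (by positivity),
    ENNReal.le_inv_iff_mul_le, mul_comm]
  exact hville

end MeasureTheory

section PastFiltration

variable {Ω β : Type*} {mΩ : MeasurableSpace Ω} [MeasurableSpace β] {X : ℕ → Ω → β}

/-- Unlike `Filtration.natural`, the `n`-th σ-algebra is generated by `X i` for `i < n` only, so
that `X n` is independent of it. -/
def pastFiltration (hX : ∀ i, Measurable (X i)) : Filtration ℕ mΩ where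
  seq n := ⨆ i < n, MeasurableSpace.comap (X i) ‹_›
  mono' _ _ hmn := iSup₂_mono' fun i hi => ⟨i, hi.trans_le hmn, le_rfl⟩
  le' _ := iSup₂_le fun i _ => (hX i).comap_le

theorem measurable_pastFiltration (hX : ∀ i, Measurable (X i)) {i n : ℕ} (hi : i < n) :
    Measurable[pastFiltration hX n] (X i) :=
  Measurable.of_comap_le (le_iSup₂ (f := fun j (_ : j < n) => MeasurableSpace.comap (X j) _) i hi)

theorem indep_pastFiltration {P : Measure Ω} (hX : ∀ i, Measurable (X i)) (hind : iIndepFun X P)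
    (n : ℕ) : Indep (pastFiltration hX n) (MeasurableSpace.comap (X n) ‹_›) P := by
  simpa [pastFiltration] using indep_iSup_of_disjoint (fun i => (hX i).comap_le)
    ((iIndepFun_iff_iIndep _ _ _).1 hind) (S := Set.Iio n) (T := {n}) (by simp)

end PastFiltration

theorem setLIntegral_mul_comp_eq_of_indep {Ω β : Type*} {m mΩ : MeasurableSpace Ω}
    [MeasurableSpace β] {P : Measure Ω} (hm : m ≤ mΩ) {X : Ω → β} (hX : Measurable X)
    (hind : Indep m (MeasurableSpace.comap X ‹_›) P) {A : Set Ω} (hA : MeasurableSet[m] A)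
    {F : Ω → ℝ≥0∞} (hF : Measurable[m] F) {h : β → ℝ≥0∞} (hh : Measurable h) :
    ∫⁻ ω in A, F ω * h (X ω) ∂P = (∫⁻ ω in A, F ω ∂P) * ∫⁻ ω, h (X ω) ∂P := by
  simp_rw [← lintegral_indicator (hm A hA), Set.indicator_mul_left]
  exact lintegral_mul_eq_lintegral_mul_lintegral_of_independent_measurableSpace hm
    hX.comap_le hind (hF.indicator hA) (hh.comp (comap_measurable X))

theorem lintegral_ofReal_exp_sub_le_one {Ω : Type*} {mΩ : MeasurableSpace Ω} {P : Measure Ω}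
    {g : Ω → ℝ} {a : ℝ}
    (hg : ∫⁻ ω, ENNReal.ofReal (Real.exp (g ω)) ∂P ≤ ENNReal.ofReal (Real.exp a)) :
    ∫⁻ ω, ENNReal.ofReal (Real.exp (g ω - a)) ∂P ≤ 1 := by
  simp_rw [sub_eq_add_neg, Real.exp_add, ENNReal.ofReal_mul (Real.exp_pos _).le]
  rw [lintegral_mul_const' _ _ ENNReal.ofReal_ne_top]
  calc _ ≤ ENNReal.ofReal (Real.exp a) * ENNReal.ofReal (Real.exp (-a)) := by gcongr
    _ = 1 := by rw [← ENNReal.ofReal_mul (Real.exp_pos _).le, ← Real.exp_add]; simp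

section Mixture

variable {Ω E : Type*} {mΩ : MeasurableSpace Ω} {P : Measure Ω}
  [NormedAddCommGroup E] [InnerProductSpace ℝ E] [MeasurableSpace E] {γ : Measure E}

noncomputable def mixtureProcess (γ : Measure E) (σ : ℝ) (S : ℕ → Ω → E) (n : ℕ) (ω : Ω) : ℝ :=
  ∫ η, Real.exp (⟪η, S n ω⟫ - n * σ * ⟪η, η⟫ / 2) ∂γ

theorem mixtureProcess_sum_zero (σ : ℝ) (X : ℕ → Ω → E) :
    mixtureProcess γ σ (fun n ω => ∑ i ∈ Finset.range n, X i ω) 0 = fun _ => γ.real Set.univ := by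
  ext ω
  simp [mixtureProcess]

variable [BorelSpace E] [SecondCountableTopology E]

theorem integrable_exp_inner_sub [IsFiniteMeasure γ] {δ : ℝ} (hγ : ∀ᵐ η ∂γ, ‖η‖ ^ 2 ≤ δ)
    (s : E) (c : ℝ) : Integrable (fun η => Real.exp (⟪η, s⟫ - c * ⟪η, η⟫ / 2)) γ := by
  refine (integrable_const (Real.exp (√δ * ‖s‖ + |c| * δ / 2))).mono'
    (by fun_prop) (hγ.mono fun η hη => ?_)
  rw [Real.norm_of_nonneg (Real.exp_pos _).le, Real.exp_le_exp, real_inner_self_eq_norm_sq]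
  have hη : ‖η‖ ≤ √δ := Real.le_sqrt_of_sq_le hη
  have hc : -(c * ‖η‖ ^ 2) ≤ |c| * δ := by
    nlinarith [neg_abs_le c, abs_nonneg c, sq_nonneg ‖η‖]
  nlinarith [real_inner_le_norm η s, norm_nonneg s]

theorem ofReal_mixtureProcess [IsFiniteMeasure γ] {δ : ℝ} (hγ : ∀ᵐ η ∂γ, ‖η‖ ^ 2 ≤ δ) (σ : ℝ)
    (S : ℕ → Ω → E) (n : ℕ) (ω : Ω) :
    ENNReal.ofReal (mixtureProcess γ σ S n ω)
      = ∫⁻ η, ENNReal.ofReal (Real.exp (⟪η, S n ω⟫ - n * σ * ⟪η, η⟫ / 2)) ∂γ :=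
  ofReal_integral_eq_lintegral_ofReal (integrable_exp_inner_sub hγ _ _)
    (.of_forall fun _ => (Real.exp_pos _).le)

theorem stronglyMeasurable_integral_exp_inner_sub [SFinite γ] (c : ℝ) :
    StronglyMeasurable fun s : E => ∫ η, Real.exp (⟪η, s⟫ - c * ⟪η, η⟫ / 2) ∂γ :=
  StronglyMeasurable.integral_prod_right'
    (f := fun p : E × E => Real.exp (⟪p.2, p.1⟫ - c * ⟪p.2, p.2⟫ / 2))
    (by fun_prop : Continuous _).stronglyMeasurable

theorem setLIntegral_exp_inner_sum_succ_le {X : ℕ → Ω → E} (hX : ∀ i, Measurable (X i))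
    (hind : iIndepFun X P) {σ : ℝ} {η : E} {n : ℕ}
    (hmgf : ∫⁻ ω, ENNReal.ofReal (Real.exp ⟪η, X n ω⟫) ∂P
      ≤ ENNReal.ofReal (Real.exp (σ * ⟪η, η⟫ / 2)))
    {A : Set Ω} (hA : MeasurableSet[pastFiltration hX n] A) :
    ∫⁻ ω in A, ENNReal.ofReal
        (Real.exp (⟪η, ∑ i ∈ Finset.range (n + 1), X i ω⟫ - (n + 1 : ℕ) * σ * ⟪η, η⟫ / 2)) ∂P
      ≤ ∫⁻ ω in A, ENNReal.ofReal
        (Real.exp (⟪η, ∑ i ∈ Finset.range n, X i ω⟫ - n * σ * ⟪η, η⟫ / 2)) ∂P := by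
  have hsplit : ∀ ω,
      Real.exp (⟪η, ∑ i ∈ Finset.range (n + 1), X i ω⟫ - (n + 1 : ℕ) * σ * ⟪η, η⟫ / 2)
        = Real.exp (⟪η, ∑ i ∈ Finset.range n, X i ω⟫ - n * σ * ⟪η, η⟫ / 2)
          * Real.exp (⟪η, X n ω⟫ - σ * ⟪η, η⟫ / 2) := by
    intro ω
    rw [← Real.exp_add, Finset.sum_range_succ, inner_add_right]
    push_cast
    ring_nf
  have hpast : Measurable[pastFiltration hX n] fun ω => ∑ i ∈ Finset.range n, X i ω :=
    Finset.measurable_fun_sum _ fun i hi => measurable_pastFiltration hX (Finset.mem_range.1 hi)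
  simp_rw [hsplit, ENNReal.ofReal_mul (Real.exp_pos _).le]
  rw [setLIntegral_mul_comp_eq_of_indep ((pastFiltration hX).le n) (hX n)
    (indep_pastFiltration hX hind n) hA
    (F := fun ω => ENNReal.ofReal
      (Real.exp (⟪η, ∑ i ∈ Finset.range n, X i ω⟫ - n * σ * ⟪η, η⟫ / 2)))
    (h := fun v => ENNReal.ofReal (Real.exp (⟪η, v⟫ - σ * ⟪η, η⟫ / 2))) (by fun_prop)
    (by fun_prop)]
  exact mul_le_of_le_one_right' (lintegral_ofReal_exp_sub_le_one hmgf)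

theorem setLIntegral_ofReal_mixtureProcess_succ_le [SFinite P] [IsFiniteMeasure γ]
    {X : ℕ → Ω → E} (hX : ∀ i, Measurable (X i)) (hind : iIndepFun X P) {σ δ : ℝ}
    (hγ : ∀ᵐ η ∂γ, ‖η‖ ^ 2 ≤ δ)
    (hmgf : ∀ᵐ η ∂γ, ∀ n, ∫⁻ ω, ENNReal.ofReal (Real.exp ⟪η, X n ω⟫) ∂P
      ≤ ENNReal.ofReal (Real.exp (σ * ⟪η, η⟫ / 2)))
    (n : ℕ) {A : Set Ω} (hA : MeasurableSet[pastFiltration hX n] A) :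
    ∫⁻ ω in A, ENNReal.ofReal
        (mixtureProcess γ σ (fun n ω => ∑ i ∈ Finset.range n, X i ω) (n + 1) ω) ∂P
      ≤ ∫⁻ ω in A, ENNReal.ofReal
        (mixtureProcess γ σ (fun n ω => ∑ i ∈ Finset.range n, X i ω) n ω) ∂P := by
  simp_rw [ofReal_mixtureProcess hγ]
  refine (lintegral_lintegral_swap (by fun_prop)).trans_le
    ((lintegral_mono_ae ?_).trans_eq (lintegral_lintegral_swap (by fun_prop)))
  exact hmgf.mono fun η hη => setLIntegral_exp_inner_sum_succ_le hX hind (hη n) hA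

theorem supermartingale_mixtureProcess [IsFiniteMeasure P] [IsFiniteMeasure γ]
    {X : ℕ → Ω → E} (hX : ∀ i, Measurable (X i)) (hind : iIndepFun X P) {σ δ : ℝ}
    (hγ : ∀ᵐ η ∂γ, ‖η‖ ^ 2 ≤ δ)
    (hmgf : ∀ᵐ η ∂γ, ∀ n, ∫⁻ ω, ENNReal.ofReal (Real.exp ⟪η, X n ω⟫) ∂P
      ≤ ENNReal.ofReal (Real.exp (σ * ⟪η, η⟫ / 2))) :
    Supermartingale (mixtureProcess γ σ fun n ω => ∑ i ∈ Finset.range n, X i ω)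
      (pastFiltration hX) P := by
  have hZ0 : ∫⁻ ω, ENNReal.ofReal
      (mixtureProcess γ σ (fun n ω => ∑ i ∈ Finset.range n, X i ω) 0 ω) ∂P ≠ ∞ := by
    simpa [mixtureProcess_sum_zero] using
      ENNReal.mul_ne_top (measure_ne_top γ _) (measure_ne_top P _)
  refine supermartingale_of_setLIntegral_succ_le (fun n => ?_)
    (fun n ω => integral_nonneg fun η => (Real.exp_pos _).le) hZ0
    (setLIntegral_ofReal_mixtureProcess_succ_le hX hind hγ hmgf)
  exact (stronglyMeasurable_integral_exp_inner_sub _).comp_measurable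
    (Finset.measurable_fun_sum _ fun i hi =>
      measurable_pastFiltration hX (Finset.mem_range.1 hi))

end Mixture

theorem expectation_sup_sqrt_mixture_le_two_general
    (k : ℕ) (σ δ : ℝ)
    (Ω : Type) [mΩ : MeasurableSpace Ω] (P : Measure Ω) [IsProbabilityMeasure P]
    (Y : ℕ → Ω → EuclideanSpace ℝ (Fin k)) (hY : ∀ i, Measurable (Y i))
    (hindep : iIndepFun Y P)
    (hident : ∀ i, Measure.map (Y i) P = Measure.map (Y 0) P)
    (μ : EuclideanSpace ℝ (Fin k))
    (hmgf : ∀ η : EuclideanSpace ℝ (Fin k), ‖η‖ ^ 2 ≤ δ →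
      ∫⁻ ω, ENNReal.ofReal (Real.exp ⟪η, Y 0 ω - μ⟫) ∂P
        ≤ ENNReal.ofReal (Real.exp (σ * ⟪η, η⟫ / 2)))
    (γ : Measure (EuclideanSpace ℝ (Fin k))) [IsProbabilityMeasure γ]
    (hγ : ∀ᵐ η ∂γ, ‖η‖ ^ 2 ≤ δ)
    (S : ℕ → Ω → EuclideanSpace ℝ (Fin k))
    (hS : S = fun n ω => ∑ i ∈ Finset.range n, (Y i ω - μ))
    (Z : ℕ → Ω → ℝ)
    (hZ : Z = fun n ω => ∫ η, Real.exp (⟪η, S n ω⟫ - n * σ * ⟪η, η⟫ / 2) ∂γ) :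
    ∫⁻ ω, ⨆ n : ℕ, ENNReal.ofReal (Real.sqrt (Z n ω)) ∂P ≤ 2 := by
  set X : ℕ → Ω → EuclideanSpace ℝ (Fin k) := fun i ω => Y i ω - μ
  have hX : ∀ i, Measurable (X i) := fun i => (hY i).sub_const μ
  have hmgfX : ∀ᵐ η ∂γ, ∀ n, ∫⁻ ω, ENNReal.ofReal (Real.exp ⟪η, X n ω⟫) ∂P
      ≤ ENNReal.ofReal (Real.exp (σ * ⟪η, η⟫ / 2)) := by
    filter_upwards [hγ] with η hη n
    have hF : Measurable fun v => ENNReal.ofReal (Real.exp ⟪η, v - μ⟫) := by fun_prop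
    rw [← lintegral_map hF (hY n), hident n, lintegral_map hF (hY 0)]
    exact hmgf η hη
  have hsuper := supermartingale_mixtureProcess hX
    (hindep.comp (fun _ v => v - μ) fun _ => measurable_id.sub_const μ) hγ hmgfX
  subst hZ hS
  refine hsuper.lintegral_iSup_sqrt_le_two
    (fun n ω => integral_nonneg fun _ => (Real.exp_pos _).le) ?_
  simp [mixtureProcess_sum_zero]

/-- with `Y 0, Y 1, …` i.i.d. in `ℝ^k` with mean `μ` and sub-Gaussian mgf on the
ball `‖η‖² ≤ δ`, `S n = Σ_{i<n} (Y i - μ)`, and `γ` any probability measure on that ball,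
the mixture process `Z n = ∫ exp(⟨η, S n⟩ - nσ⟨η,η⟩/2) dγ(η)` satisfies
`E[sup_n √(Z n)] ≤ 2`. -/
theorem expectation_sup_sqrt_mixture_le_two
    (k : ℕ) (σ δ : ℝ) (hσ : 0 < σ) (hδ : 0 < δ)
    (Ω : Type) [mΩ : MeasurableSpace Ω] (P : Measure Ω) [IsProbabilityMeasure P]
    (Y : ℕ → Ω → EuclideanSpace ℝ (Fin k)) (hY : ∀ i, Measurable (Y i))
    (hindep : iIndepFun Y P)
    (hident : ∀ i, Measure.map (Y i) P = Measure.map (Y 0) P)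
    (μ : EuclideanSpace ℝ (Fin k)) (hint : Integrable (Y 0) P) (hμ : μ = ∫ ω, Y 0 ω ∂P)
    (hmgf : ∀ η : EuclideanSpace ℝ (Fin k), ‖η‖ ^ 2 ≤ δ →
      ∫⁻ ω, ENNReal.ofReal (Real.exp ⟪η, Y 0 ω - μ⟫) ∂P
        ≤ ENNReal.ofReal (Real.exp (σ * ⟪η, η⟫ / 2)))
    (γ : Measure (EuclideanSpace ℝ (Fin k))) [IsProbabilityMeasure γ]
    (hγ : ∀ᵐ η ∂γ, ‖η‖ ^ 2 ≤ δ)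
    (S : ℕ → Ω → EuclideanSpace ℝ (Fin k))
    (hS : S = fun n ω => ∑ i ∈ Finset.range n, (Y i ω - μ))
    (Z : ℕ → Ω → ℝ)
    (hZ : Z = fun n ω => ∫ η, Real.exp (⟪η, S n ω⟫ - n * σ * ⟪η, η⟫ / 2) ∂γ) :
    ∫⁻ ω, ⨆ n : ℕ, ENNReal.ofReal (Real.sqrt (Z n ω)) ∂P ≤ 2 :=
  expectation_sup_sqrt_mixture_le_two_general k σ δ Ω (mΩ := mΩ) P Y hY hindep hident μ hmgf γ hγ S
    hS Z hZ
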